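/- arXiv:2301.00543 — 2 statements merged into one kernel-verified Lean document; each statement's English description precedes it below -/
import Mathlib

section
/- Let A = diag(1, ζₙᵃ, ζₙᵇ) generate a cyclic subgroup G of PGL₃(ℂ) of order n ≥ 3, with 0 ≤ a < b ≤ n−1 and gcd(a,b)=1. If there is no c ∈ ℂ* with {c, c·ζₙᵃ, c·ζₙᵇ} = {1, ζₙ^{−a}, ζₙ^{−b}} as multisets, then G is not conjugate in PGL₃(ℂ) to any subgroup of PGL₃(ℝ). -/
/-! Complex conjugation σ acts on PGL₃(ℂ) and fixes PGL₃(ℝ) pointwise. If a conjugate of `proj A`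
is real, then `proj A` is conjugate to `σ (proj A) = proj (diag(1, ζ⁻ᵃ, ζ⁻ᵇ))`. Lifting to GL₃(ℂ),
`A` is conjugate to `c • σ A` for a scalar `c ≠ 0`, so the two have the same characteristic
polynomial and hence the same eigenvalues; rescaling by `c⁻¹` gives the excluded multiset
identity. -/

open Matrix

noncomputable section

abbrev PGL3C := GL (Fin 3) ℂ ⧸ Subgroup.center (GL (Fin 3) ℂ)

def proj : GL (Fin 3) ℂ →* PGL3C := QuotientGroup.mk' _

def sigmaGL : GL (Fin 3) ℂ ≃* GL (Fin 3) ℂ :=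
  Units.mapEquiv (Complex.conjAe.toRingEquiv.mapMatrix.toMulEquiv)

lemma sigma_center :
    (Subgroup.center (GL (Fin 3) ℂ)).map sigmaGL.toMonoidHom
      = Subgroup.center (GL (Fin 3) ℂ) := by
  ext x
  simp only [Subgroup.mem_map, Subgroup.mem_center_iff]
  constructor
  · rintro ⟨y, hy, rfl⟩ g
    have := hy (sigmaGL.symm g)
    calc g * sigmaGL y = sigmaGL (sigmaGL.symm g * y) := by
          simp [_root_.map_mul]
      _ = sigmaGL (y * sigmaGL.symm g) := by rw [this]
      _ = sigmaGL y * g := by simp [_root_.map_mul]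
  · intro hx
    refine ⟨sigmaGL.symm x, fun g => ?_, by simp⟩
    have := hx (sigmaGL g)
    calc g * sigmaGL.symm x = sigmaGL.symm (sigmaGL g * x) := by simp [_root_.map_mul]
      _ = sigmaGL.symm (x * sigmaGL g) := by rw [this]
      _ = sigmaGL.symm x * g := by simp [_root_.map_mul]

def sigmaPGL : PGL3C ≃* PGL3C :=
  QuotientGroup.congr _ _ sigmaGL sigma_center

def PGL3R : Subgroup PGL3C :=
  ((Units.map ((algebraMap ℝ ℂ).mapMatrix.toMonoidHom :
      Matrix (Fin 3) (Fin 3) ℝ →* Matrix (Fin 3) (Fin 3) ℂ)).range).map proj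

open Polynomial

lemma Matrix.roots_charpoly_diagonal {ι R : Type*} [Fintype ι] [DecidableEq ι] [CommRing R]
    [IsDomain R] (d : ι → R) :
    (diagonal d).charpoly.roots = Finset.univ.val.map d := by
  rw [charpoly_diagonal, Finset.prod_eq_multiset_prod,
    ← roots_multiset_prod_X_sub_C (Finset.univ.val.map d), Multiset.map_map]
  rfl

lemma Matrix.ProjGenLinGroup.exists_charpoly_eq_smul_of_isConj {ι R : Type*} [Fintype ι]
    [DecidableEq ι] [CommRing R] {g h : GL ι R} (hgh : IsConj (mk g) (mk h)) :
    ∃ u : Rˣ, (g : Matrix ι ι R).charpoly = ((u : R) • (h : Matrix ι ι R)).charpoly := by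
  obtain ⟨p, hp⟩ := isConj_iff.1 hgh
  obtain ⟨P, rfl⟩ := mk_surjective p
  rw [← map_inv, ← map_mul, ← map_mul, mk_eq_mk_iff] at hp
  obtain ⟨u, rfl⟩ := hp
  refine ⟨u⁻¹, ?_⟩
  simp [← smul_one_eq_diagonal, smul_smul]

theorem IsConj.isConj_map_of_map_eq_self {G : Type*} [Group G] (σ : G →* G) {x y : G}
    (hxy : IsConj x y) (hy : σ y = y) : IsConj x (σ x) :=
  hxy.trans (hy ▸ (σ.map_isConj hxy).symm)

lemma sigmaPGL_proj (g : GL (Fin 3) ℂ) : sigmaPGL (proj g) = proj (sigmaGL g) := rfl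

lemma sigmaGL_val (g : GL (Fin 3) ℂ) :
    (sigmaGL g : Matrix (Fin 3) (Fin 3) ℂ) = (g : Matrix (Fin 3) (Fin 3) ℂ).map (starRingEnd ℂ) :=
  rfl

lemma sigmaPGL_eq_self_of_mem_PGL3R {x : PGL3C} (hx : x ∈ PGL3R) : sigmaPGL x = x := by
  obtain ⟨_, ⟨R, rfl⟩, rfl⟩ := hx
  rw [sigmaPGL_proj]
  congr 1
  ext i j
  simp [sigmaGL_val]

lemma Complex.conj_exp_two_pi_I_div (n : ℕ) :
    starRingEnd ℂ (exp (2 * Real.pi * I / n)) = (exp (2 * Real.pi * I / n))⁻¹ := by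
  rw [← exp_conj, ← exp_neg]
  congr 1
  rw [map_div₀, map_mul, map_mul, conj_I, conj_ofReal, map_ofNat, map_natCast]
  ring

theorem stmt3_general (n a b : ℕ)
    (A : GL (Fin 3) ℂ)
    (hA : (A : Matrix (Fin 3) (Fin 3) ℂ)
      = Matrix.diagonal ![1, (Complex.exp (2 * Real.pi * Complex.I / (n : ℂ))) ^ a, (Complex.exp (2 * Real.pi * Complex.I / (n : ℂ))) ^ b])
    (hno : ¬∃ c : ℂ, c ≠ 0 ∧
      ({c, c * (Complex.exp (2 * Real.pi * Complex.I / (n : ℂ))) ^ a, c * (Complex.exp (2 * Real.pi * Complex.I / (n : ℂ))) ^ b} : Multiset ℂ)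
        = {1, ((Complex.exp (2 * Real.pi * Complex.I / (n : ℂ))) ^ a)⁻¹, ((Complex.exp (2 * Real.pi * Complex.I / (n : ℂ))) ^ b)⁻¹}) :
    ¬∃ φ : PGL3C,
      Subgroup.map (MulAut.conj φ).toMonoidHom (Subgroup.closure {proj A}) ≤ PGL3R := by
  set ζ : ℂ := Complex.exp (2 * Real.pi * Complex.I / (n : ℂ))
  rintro ⟨φ, hφ⟩
  have hreal : φ * proj A * φ⁻¹ ∈ PGL3R :=
    hφ (Subgroup.mem_map_of_mem _ (Subgroup.subset_closure rfl))
  have hconj : IsConj (proj A) (proj (sigmaGL A)) :=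
    (isConj_iff.2 ⟨φ, rfl⟩).isConj_map_of_map_eq_self sigmaPGL.toMonoidHom
      (sigmaPGL_eq_self_of_mem_PGL3R hreal)
  obtain ⟨u, hu⟩ := ProjGenLinGroup.exists_charpoly_eq_smul_of_isConj hconj
  have hσA : (sigmaGL A : Matrix (Fin 3) (Fin 3) ℂ) = diagonal ![1, (ζ ^ a)⁻¹, (ζ ^ b)⁻¹] := by
    rw [sigmaGL_val, hA, diagonal_map (map_zero _)]
    congr 1
    ext i
    fin_cases i <;> simp [ζ, Complex.conj_exp_two_pi_I_div]
  have hroots := congrArg roots hu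
  rw [hA, hσA, ← diagonal_smul, roots_charpoly_diagonal, roots_charpoly_diagonal] at hroots
  refine hno ⟨(u : ℂ)⁻¹, by simp, ?_⟩
  have hscaled := congrArg (Multiset.map ((u : ℂ)⁻¹ * ·)) hroots
  simp only [Fin.univ_val_map, Multiset.map_coe, List.map_ofFn] at hscaled
  exact Multiset.coe_eq_coe.2 (by simpa [List.ofFn_succ, ← mul_assoc] using hscaled)

theorem stmt3 (n a b : ℕ) (hn : 3 ≤ n) (hab : a < b) (hb : b ≤ n - 1)
    (hgcd : Nat.gcd a b = 1)
    (A : GL (Fin 3) ℂ)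
    (hA : (A : Matrix (Fin 3) (Fin 3) ℂ)
      = Matrix.diagonal ![1, (Complex.exp (2 * Real.pi * Complex.I / (n : ℂ))) ^ a, (Complex.exp (2 * Real.pi * Complex.I / (n : ℂ))) ^ b])
    (hno : ¬∃ c : ℂ, c ≠ 0 ∧
      ({c, c * (Complex.exp (2 * Real.pi * Complex.I / (n : ℂ))) ^ a, c * (Complex.exp (2 * Real.pi * Complex.I / (n : ℂ))) ^ b} : Multiset ℂ)
        = {1, ((Complex.exp (2 * Real.pi * Complex.I / (n : ℂ))) ^ a)⁻¹, ((Complex.exp (2 * Real.pi * Complex.I / (n : ℂ))) ^ b)⁻¹}) :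
    ¬∃ φ : PGL3C,
      Subgroup.map (MulAut.conj φ).toMonoidHom (Subgroup.closure {proj A}) ≤ PGL3R :=
  stmt3_general n a b A hA hno
end
end

section
/- For each n ≥ 3, every dihedral subgroup of PGL₃(ℂ) of order 2n is conjugate in PGL₃(ℂ) to a subgroup of PGL₃(ℝ); i.e., dihedral groups D_{2n} in PGL₃(ℂ) are definable over ℝ. -/
/-
Lift the rotation `a` and the reflection `b` to `A, B ∈ GL₃(ℂ)` with `Aⁿ = 1`, `B² = 1` and
`ABA = cB`. Then `A` is diagonalizable and conjugation by `B` turns `A` into `cA⁻¹`, so `μ ↦ c / μ`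
permutes the eigenvalues of `A`. In odd dimension a determinant computation produces an eigenvalue
`ω` with `ω² = c`, and an `ω`-eigenvector `w` with `Bw = ±w`. Since `a² ≠ 1`, `A² ≠ c`, so there is
an eigenvalue `μ = ωζ` with `μ² ≠ c`; for an eigenvector `v`, `Bv` has eigenvalue `ωζ⁻¹ = ωζ̄`
because `ζⁿ = 1`. In the basis `w, v + Bv, i(v - Bv)`, `A` is `ω` times a real rotation block and
`B` is a real diagonal matrix.
-/

open Matrix

noncomputable section

open Complex ComplexConjugate

open Polynomial in
theorem Module.End.IsSemisimple.aeval_eq_zero_of_forall_hasEigenvalue {K V : Type*} [Field K]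
    [IsAlgClosed K] [AddCommGroup V] [Module K V] [FiniteDimensional K V] {f : Module.End K V}
    (hf : f.IsSemisimple) {p : K[X]} (hp : ∀ μ, f.HasEigenvalue μ → p.IsRoot μ) :
    aeval f p = 0 := by
  rw [← LinearMap.ker_eq_top, eq_top_iff, ← hf.iSup_eigenspace_eq_top]
  refine iSup_le fun μ v hv => ?_
  rw [LinearMap.mem_ker, aeval_apply_of_mem_apply_eq_smul (mem_eigenspace_iff.mp hv)]
  rcases eq_or_ne v 0 with rfl | hv0
  · exact smul_zero _
  · rw [(hp μ (hasEigenvalue_of_hasEigenvector ⟨hv, hv0⟩)).eq_zero, zero_smul]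

theorem DihedralGroup.closure_r_one_sr_zero (n : ℕ) :
    Subgroup.closure {r 1, sr 0} = (⊤ : Subgroup (DihedralGroup n)) := by
  refine eq_top_iff.mpr fun g _ => ?_
  have hr : ∀ i : ZMod n, r i ∈ Subgroup.closure {(r 1 : DihedralGroup n), sr 0} := fun i => by
    rw [← ZMod.intCast_zmod_cast i, ← r_one_zpow]
    exact zpow_mem (Subgroup.subset_closure (by simp)) _
  cases g with
  | r i => exact hr i
  | sr i =>
    rw [← zero_add i, ← sr_mul_r]
    exact mul_mem (Subgroup.subset_closure (by simp)) (hr i)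

theorem Matrix.GeneralLinearGroup.exists_scalar_mul_pow_eq_one {ι K : Type*} [Fintype ι]
    [DecidableEq ι] [Field K] [IsAlgClosed K] {m : ℕ} (hm : m ≠ 0) {A : GL ι K}
    (hA : A ^ m ∈ Subgroup.center (GL ι K)) : ∃ u : Kˣ, (scalar ι u * A) ^ m = 1 := by
  obtain ⟨t, ht⟩ := GeneralLinearGroup.center_eq_range_scalar (n := ι) (R := K) ▸ hA
  obtain ⟨s, hs⟩ := IsAlgClosed.exists_pow_nat_eq (t⁻¹ : Kˣ).1 (Nat.pos_of_ne_zero hm)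
  have hs0 : s ≠ 0 := by
    rintro rfl
    exact (t⁻¹).ne_zero (by rw [← hs, zero_pow hm])
  refine ⟨Units.mk0 s hs0, ?_⟩
  have hu : Units.mk0 s hs0 ^ m = t⁻¹ := Units.ext (by simpa using hs)
  rw [Commute.mul_pow (scalar_commute _ A), ← ht, ← map_pow, hu, ← map_mul, inv_mul_cancel, map_one]

theorem Matrix.pow_mulVec_eq_smul {m K : Type*} [Fintype m] [DecidableEq m] [CommSemiring K]
    {A : Matrix m m K} {μ : K} {v : m → K} (hv : A *ᵥ v = μ • v) (k : ℕ) :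
    (A ^ k) *ᵥ v = μ ^ k • v := by
  induction k with
  | zero => simp
  | succ k ih => rw [pow_succ, ← mulVec_mulVec, hv, mulVec_smul, ih, smul_smul, pow_succ']

theorem Matrix.pow_eq_one_of_mulVec_eq_smul {m K : Type*} [Fintype m] [DecidableEq m] [Field K]
    {A : Matrix m m K} {n : ℕ} (hA : A ^ n = 1) {μ : K} {v : m → K} (hv : v ≠ 0)
    (hAv : A *ᵥ v = μ • v) : μ ^ n = 1 := by
  have := pow_mulVec_eq_smul hAv n
  rw [hA, one_mulVec] at this
  exact smul_left_injective K hv (by simpa using this.symm)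

theorem Matrix.mulVec_mulVec_eq_of_mul_mul_eq_smul {ι K : Type*} [Fintype ι] [Field K]
    {A B : Matrix ι ι K} {c μ : K} (hrel : A * B * A = c • B) (hμ : μ ≠ 0) {v : ι → K}
    (hv : A *ᵥ v = μ • v) : A *ᵥ (B *ᵥ v) = (c / μ) • (B *ᵥ v) := by
  have h : μ • (A *ᵥ (B *ᵥ v)) = c • (B *ᵥ v) := by
    rw [← mulVec_smul, ← mulVec_smul, ← hv, mulVec_mulVec, mulVec_mulVec, hrel, smul_mulVec]
  rw [div_eq_inv_mul, ← smul_smul, ← h, smul_smul, inv_mul_cancel₀ hμ, one_smul]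

theorem Matrix.exists_eigenvector_sq_eq_of_mul_mul_eq_smul {ι K : Type*} [Fintype ι]
    [DecidableEq ι] [Field K] (hι : Odd (Fintype.card ι)) (h2 : (2 : K) ≠ 0)
    {A B : Matrix ι ι K} {c : K} (hc : c ≠ 0) (hB : B.det ≠ 0) (hrel : A * B * A = c • B) :
    ∃ ω : K, ω ^ 2 = c ∧ ∃ v ≠ 0, A *ᵥ v = ω • v := by
  obtain ⟨k, hk⟩ := hι
  have hdet : A.det ^ 2 = c ^ (2 * k + 1) := by
    have := congrArg det hrel
    rw [det_mul, det_mul, det_smul, hk] at this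
    exact mul_right_cancel₀ hB (by rw [← this]; ring)
  have hd0 : A.det ≠ 0 := fun h => pow_ne_zero _ hc (by rw [← hdet, h, zero_pow two_ne_zero])
  set ω := A.det / c ^ k
  have hω2 : ω ^ 2 = c := by
    rw [div_pow, hdet, ← pow_mul, pow_succ, mul_comm 2 k]
    field_simp
  have hωdet : ω ^ (2 * k + 1) = A.det := by
    rw [pow_succ, pow_mul, hω2]
    exact mul_div_cancel₀ _ (pow_ne_zero k hc)
  -- since `ω ^ (2k+1) = det A`, taking determinants gives `det (ω - A) = -det (ω - A)`
  have key : (ω • 1 - A) * B * A = (-ω) • (B * (ω • 1 - A)) := by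
    rw [sub_mul, sub_mul, hrel, ← hω2]
    simp only [smul_mul_assoc, one_mul, mul_sub, mul_smul_comm, mul_one, smul_sub, smul_smul]
    module
  have hsing : (ω • 1 - A).det = 0 := by
    have := congrArg det key
    rw [det_mul, det_mul, det_smul, det_mul, hk, neg_pow, pow_succ (-1 : K), pow_mul, neg_one_sq,
      one_pow, hωdet] at this
    have : (ω • 1 - A).det * B.det * A.det * 2 = 0 := by linear_combination this
    simpa [hB, hd0, h2] using this
  obtain ⟨v, hv, hAv⟩ := exists_mulVec_eq_zero_iff.mpr hsing
  refine ⟨ω, hω2, v, hv, ?_⟩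
  rw [sub_mulVec, smul_mulVec, one_mulVec, sub_eq_zero] at hAv
  exact hAv.symm

open Polynomial in
theorem Matrix.exists_eigenvector_sq_ne_of_pow_eq_one {ι K : Type*} [Fintype ι] [DecidableEq ι]
    [Field K] [IsAlgClosed K] {A : Matrix ι ι K} {n : ℕ} (hn : (n : K) ≠ 0) (hA : A ^ n = 1)
    {c : K} (hA2 : A ^ 2 ≠ c • 1) : ∃ μ : K, μ ^ 2 ≠ c ∧ ∃ v ≠ 0, A *ᵥ v = μ • v := by
  by_contra! h
  set f : Module.End K (ι → K) := toLinAlgEquiv' A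
  have hf : f.IsSemisimple := by
    refine Module.End.isSemisimple_of_squarefree_aeval_eq_zero
      (separable_X_pow_sub_C (1 : K) hn one_ne_zero).squarefree ?_
    rw [map_sub, aeval_X_pow, aeval_C, map_one, ← map_pow, hA, map_one, sub_self]
  have hf2 := hf.aeval_eq_zero_of_forall_hasEigenvalue (p := X ^ 2 - C c) fun μ hμ => by
    obtain ⟨v, hv, hv0⟩ := hμ.exists_hasEigenvector
    by_contra hμc
    exact h μ (by simpa [sub_eq_zero] using hμc) v hv0 (Module.End.mem_eigenspace_iff.mp hv)
  apply hA2
  rw [← sub_eq_zero]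
  apply toLinAlgEquiv'.injective
  rw [map_sub, aeval_X_pow, aeval_C, Algebra.algebraMap_eq_smul_one] at hf2
  rwa [map_sub, map_pow, map_smul, map_one, map_zero]

theorem Matrix.exists_common_eigenvector_of_mul_self_eq_one {ι K : Type*} [Fintype ι]
    [DecidableEq ι] [Field K] {A B : Matrix ι ι K} (hB : B * B = 1) {ω : K} {v : ι → K} (hv : v ≠ 0)
    (hAv : A *ᵥ v = ω • v) (hABv : A *ᵥ (B *ᵥ v) = ω • (B *ᵥ v)) :
    ∃ w ≠ 0, A *ᵥ w = ω • w ∧ (B *ᵥ w = w ∨ B *ᵥ w = -w) := by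
  have hBB : B *ᵥ (B *ᵥ v) = v := by rw [mulVec_mulVec, hB, one_mulVec]
  by_cases h : v + B *ᵥ v = 0
  · refine ⟨v, hv, hAv, Or.inr ?_⟩
    rw [eq_neg_iff_add_eq_zero, add_comm, h]
  · refine ⟨v + B *ᵥ v, h, by rw [mulVec_add, hAv, hABv, smul_add], Or.inl ?_⟩
    rw [mulVec_add, hBB, add_comm]

theorem Matrix.exists_common_eigenvector_of_mul_mul_eq_smul {ι K : Type*} [Fintype ι]
    [DecidableEq ι] [Field K] (hι : Odd (Fintype.card ι)) (h2 : (2 : K) ≠ 0)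
    {A B : Matrix ι ι K} {c : K} (hc : c ≠ 0) (hB : B * B = 1) (hrel : A * B * A = c • B) :
    ∃ ω : K, ω ^ 2 = c ∧ ∃ w ≠ 0, A *ᵥ w = ω • w ∧ (B *ᵥ w = w ∨ B *ᵥ w = -w) := by
  have hBdet : B.det ≠ 0 := by
    have := congrArg det hB
    rw [det_mul, det_one] at this
    exact left_ne_zero_of_mul_eq_one this
  obtain ⟨ω, hω2, v, hv, hAv⟩ := exists_eigenvector_sq_eq_of_mul_mul_eq_smul hι h2 hc hBdet hrel
  have hω0 : ω ≠ 0 := by rintro rfl; exact hc (by rw [← hω2]; ring)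
  have hcω : c / ω = ω := by rw [← hω2, sq, mul_div_cancel_right₀ _ hω0]
  exact ⟨ω, hω2, exists_common_eigenvector_of_mul_self_eq_one hB hv hAv
    (hcω ▸ mulVec_mulVec_eq_of_mul_mul_eq_smul hrel hω0 hAv)⟩

theorem Matrix.isUnit_of_mulVec_col_eq_smul {m K : Type*} [Fintype m] [DecidableEq m] [Field K]
    {A V : Matrix m m K} {d : m → K} (hd : Function.Injective d) (hV : ∀ j, V.col j ≠ 0)
    (hAV : ∀ j, A *ᵥ V.col j = d j • V.col j) : IsUnit V :=
  linearIndependent_cols_iff_isUnit.mp <| Module.End.eigenvectors_linearIndependent' (toLin' A) d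
    hd _ fun j => ⟨Module.End.mem_eigenspace_iff.mpr (hAV j), hV j⟩

theorem Matrix.mul_eq_mul_of_mulVec_col {m n K : Type*} [Fintype m] [Fintype n] [CommSemiring K]
    {A : Matrix m m K} {V : Matrix m n K} {S : Matrix n n K}
    (h : ∀ j, A *ᵥ V.col j = ∑ i, S i j • V.col i) : A * V = V * S := by
  ext i j
  have := congrFun (h j) i
  simp only [mulVec, dotProduct, col_apply, Finset.sum_apply, Pi.smul_apply, smul_eq_mul] at this
  rw [mul_apply, this, mul_apply]
  exact Finset.sum_congr rfl fun k _ => mul_comm _ _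

/-- Its columns `e₀, e₁ + e₂, i (e₁ - e₂)` turn a pair of eigenlines for `ζ, conj ζ` into a real
rotation plane. -/
def realBasisChange : Matrix (Fin 3) (Fin 3) ℂ := !![1, 0, 0; 0, 1, I; 0, 1, -I]

def rotationBlock (z : ℂ) : Matrix (Fin 3) (Fin 3) ℝ := !![1, 0, 0; 0, z.re, -z.im; 0, z.im, z.re]

theorem isUnit_realBasisChange : IsUnit realBasisChange := by
  rw [isUnit_iff_isUnit_det, isUnit_iff_ne_zero, det_fin_three]
  simp [realBasisChange, Complex.ext_iff]
  norm_num

theorem diagonal_mul_realBasisChange (z : ℂ) :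
    diagonal ![1, z, conj z] * realBasisChange = realBasisChange * (rotationBlock z).map (↑) := by
  ext i j
  fin_cases i <;> fin_cases j <;>
    simp [realBasisChange, rotationBlock, mul_apply, Fin.sum_univ_three, Complex.ext_iff]

theorem swap_mul_realBasisChange (ε : ℝ) :
    !![(ε : ℂ), 0, 0; 0, 0, 1; 0, 1, 0] * realBasisChange
      = realBasisChange * (!![ε, 0, 0; 0, 1, 0; 0, 0, -1] : Matrix (Fin 3) (Fin 3) ℝ).map (↑) := by
  ext i j
  fin_cases i <;> fin_cases j <;> simp [realBasisChange, mul_apply, Fin.sum_univ_three]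

theorem Matrix.exists_eigenbasis_of_mul_mul_eq_smul {A B : Matrix (Fin 3) (Fin 3) ℂ} {n : ℕ}
    (hn : n ≠ 0) (hA : A ^ n = 1) (hB : B * B = 1) {c : ℂ} (hc : c ≠ 0)
    (hrel : A * B * A = c • B) (hA2 : A ^ 2 ≠ c • 1) :
    ∃ (V : Matrix (Fin 3) (Fin 3) ℂ) (ω ζ : ℂ) (ε : ℝ), IsUnit V ∧
      A * V = V * (ω • diagonal ![1, ζ, conj ζ]) ∧
      B * V = V * !![(ε : ℂ), 0, 0; 0, 0, 1; 0, 1, 0] := by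
  obtain ⟨ω, hω2, w, hw, hAw, hBw⟩ :=
    exists_common_eigenvector_of_mul_mul_eq_smul ⟨1, rfl⟩ two_ne_zero hc hB hrel
  obtain ⟨ε, hBw⟩ : ∃ ε : ℝ, B *ᵥ w = (ε : ℂ) • w :=
    hBw.elim (fun h => ⟨1, by simp [h]⟩) fun h => ⟨-1, by simp [h]⟩
  obtain ⟨μ, hμ, v, hv, hAv⟩ :=
    exists_eigenvector_sq_ne_of_pow_eq_one (by exact_mod_cast hn) hA hA2
  have hμn := pow_eq_one_of_mulVec_eq_smul hA hv hAv
  have hμ0 : μ ≠ 0 := by rintro rfl; exact zero_ne_one ((zero_pow hn).symm.trans hμn)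
  have hω0 : ω ≠ 0 := by rintro rfl; exact hc (by rw [← hω2]; ring)
  set ζ := μ / ω
  have hζ : conj ζ = ζ⁻¹ := by
    refine (inv_eq_conj (norm_eq_one_of_pow_eq_one ?_ hn)).symm
    rw [div_pow, hμn, pow_eq_one_of_mulVec_eq_smul hA hw hAw, div_one]
  have hζ1 : ζ ^ 2 ≠ 1 := by
    rw [div_pow, hω2]
    exact fun h => hμ ((div_eq_one_iff_eq hc).mp h)
  have hAv' : A *ᵥ (B *ᵥ v) = (ω * conj ζ) • (B *ᵥ v) := by
    rw [mulVec_mulVec_eq_of_mul_mul_eq_smul hrel hμ0 hAv, hζ, ← hω2, inv_div]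
    ring_nf
  replace hAv : A *ᵥ v = (ω * ζ) • v := by rwa [mul_div_cancel₀ _ hω0]
  have hBv' : B *ᵥ (B *ᵥ v) = v := by rw [mulVec_mulVec, hB, one_mulVec]
  set V : Matrix (Fin 3) (Fin 3) ℂ := of fun i j => ![w, v, B *ᵥ v] j i
  have hcol : V.col = ![w, v, B *ᵥ v] := by ext j i; rfl
  refine ⟨V, ω, ζ, ε, isUnit_of_mulVec_col_eq_smul (A := A) (d := fun j => ω * ![1, ζ, conj ζ] j)
    ?_ ?_ fun j => ?_, mul_eq_mul_of_mulVec_col fun j => ?_, mul_eq_mul_of_mulVec_col fun j => ?_⟩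
  · have hζ3 : ζ ≠ ζ⁻¹ := fun h => hζ1 (by
      rw [sq]; nth_rw 2 [h]; exact mul_inv_cancel₀ (div_ne_zero hμ0 hω0))
    have hζ2 : ζ ≠ 1 := fun h => hζ1 (by rw [h, one_pow])
    intro i j h
    fin_cases i <;> fin_cases j <;> simp [hω0, hζ, hζ2, hζ3, hζ3.symm] at h ⊢
  · intro j
    fin_cases j
    exacts [hw, hv, fun h => hv (by rw [← hBv', show B *ᵥ v = 0 from h, mulVec_zero])]
  all_goals fin_cases j <;> simp [hcol, Fin.sum_univ_three, hAw, hAv, hAv', hBw, hBv']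

theorem Matrix.exists_conj_real_of_mul_mul_eq_smul {A B : Matrix (Fin 3) (Fin 3) ℂ} {n : ℕ}
    (hn : n ≠ 0) (hA : A ^ n = 1) (hB : B * B = 1) {c : ℂ} (hc : c ≠ 0)
    (hrel : A * B * A = c • B) (hA2 : A ^ 2 ≠ c • 1) :
    ∃ P : Matrix (Fin 3) (Fin 3) ℂ, IsUnit P ∧
      (∃ (ω : ℂ) (R : Matrix (Fin 3) (Fin 3) ℝ), A * P = P * (ω • R.map (↑))) ∧
      ∃ S : Matrix (Fin 3) (Fin 3) ℝ, B * P = P * S.map (↑) := by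
  obtain ⟨V, ω, ζ, ε, hV, hAV, hBV⟩ := exists_eigenbasis_of_mul_mul_eq_smul hn hA hB hc hrel hA2
  refine ⟨V * realBasisChange, hV.mul isUnit_realBasisChange, ⟨ω, rotationBlock ζ, ?_⟩,
    !![ε, 0, 0; 0, 1, 0; 0, 0, -1], ?_⟩
  · rw [← mul_assoc, hAV, mul_assoc, smul_mul_assoc, diagonal_mul_realBasisChange, mul_smul_comm,
      mul_smul_comm, mul_assoc]
  · rw [← mul_assoc, hBV, mul_assoc, swap_mul_realBasisChange, ← mul_assoc]

theorem proj_scalar (u : ℂˣ) : proj (GeneralLinearGroup.scalar (Fin 3) u) = 1 :=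
  (QuotientGroup.eq_one_iff _).mpr <| by
    rw [GeneralLinearGroup.center_eq_range_scalar]
    exact ⟨u, rfl⟩

theorem exists_proj_eq_of_pow_eq_one {x : PGL3C} {m : ℕ} (hm : m ≠ 0) (hx : x ^ m = 1) :
    ∃ A : GL (Fin 3) ℂ, proj A = x ∧ A ^ m = 1 := by
  obtain ⟨A, rfl⟩ := QuotientGroup.mk'_surjective _ x
  have hA : A ^ m ∈ Subgroup.center (GL (Fin 3) ℂ) := by
    rwa [← map_pow, ← MonoidHom.mem_ker, QuotientGroup.ker_mk'] at hx
  obtain ⟨u, hu⟩ := GeneralLinearGroup.exists_scalar_mul_pow_eq_one hm hA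
  exact ⟨_, by rw [map_mul, proj_scalar, one_mul]; rfl, hu⟩

theorem proj_mem_PGL3R_of_val_eq_smul {g : GL (Fin 3) ℂ} {ω : ℂ} {R : Matrix (Fin 3) (Fin 3) ℝ}
    (h : (g : Matrix (Fin 3) (Fin 3) ℂ) = ω • R.map (↑)) : proj g ∈ PGL3R := by
  have hdet : ω ^ 3 * (R.det : ℂ) ≠ 0 := by
    have := (isUnit_iff_isUnit_det _).mp g.isUnit
    rwa [h, det_smul, Fintype.card_fin, show (R.map (↑)).det = (R.det : ℂ) from
      (ofRealHom.map_det R).symm, isUnit_iff_ne_zero] at this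
  obtain ⟨hω, hR⟩ := mul_ne_zero_iff.mp hdet
  refine ⟨Units.map _ (GeneralLinearGroup.mkOfDetNeZero R (by exact_mod_cast hR)), ⟨_, rfl⟩,
    (QuotientGroup.mk'_eq_mk' _).mpr ⟨GeneralLinearGroup.scalar (Fin 3)
      (Units.mk0 ω (pow_ne_zero_iff three_ne_zero |>.mp hω)), ?_, Units.ext ?_⟩⟩
  · rw [GeneralLinearGroup.center_eq_range_scalar]; exact ⟨_, rfl⟩
  · ext i j
    simp [h, GeneralLinearGroup.coe_scalar, mul_diagonal, mul_comm]

theorem exists_conj_mem_PGL3R {n : ℕ} (hn : n ≠ 0) {a b : PGL3C} (ha : a ^ n = 1)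
    (hb : b ^ 2 = 1) (hab : a * b * a = b) (ha2 : a ^ 2 ≠ 1) :
    ∃ φ : PGL3C, MulAut.conj φ a ∈ PGL3R ∧ MulAut.conj φ b ∈ PGL3R := by
  obtain ⟨A, rfl, hA⟩ := exists_proj_eq_of_pow_eq_one hn ha
  obtain ⟨B, rfl, hB⟩ := exists_proj_eq_of_pow_eq_one two_ne_zero hb
  obtain ⟨z, hz, hBz⟩ := (QuotientGroup.mk'_eq_mk' _).mp
    (show proj B = proj (A * B * A) by rw [map_mul, map_mul]; exact hab.symm)
  obtain ⟨u, rfl⟩ := GeneralLinearGroup.center_eq_range_scalar (n := Fin 3) (R := ℂ) ▸ hz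
  have hscalar : ((GeneralLinearGroup.scalar (Fin 3) u : GL (Fin 3) ℂ) : Matrix (Fin 3) (Fin 3) ℂ)
      = (u : ℂ) • 1 := by
    rw [GeneralLinearGroup.coe_scalar, scalar_apply, smul_one_eq_diagonal]
  have hrel : (A : Matrix (Fin 3) (Fin 3) ℂ) * B * A
      = (u : ℂ) • (B : Matrix (Fin 3) (Fin 3) ℂ) := by
    rw [← Units.val_mul, ← Units.val_mul, ← hBz, Units.val_mul, hscalar, mul_smul_comm, mul_one]
  have hA2 : (A : Matrix (Fin 3) (Fin 3) ℂ) ^ 2 ≠ (u : ℂ) • 1 := fun h => ha2 (by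
    rw [← map_pow, show A ^ 2 = GeneralLinearGroup.scalar (Fin 3) u from
      Units.ext (by rw [Units.val_pow_eq_pow_val, h, hscalar]), proj_scalar])
  obtain ⟨_, ⟨P, rfl⟩, ⟨ω, R, hAP⟩, S, hBP⟩ := exists_conj_real_of_mul_mul_eq_smul hn
    (by simpa using congrArg Units.val hA) (by simpa [sq] using congrArg Units.val hB) u.ne_zero
    hrel hA2
  have hconj : ∀ g : GL (Fin 3) ℂ, MulAut.conj (proj P⁻¹) (proj g) = proj (P⁻¹ * g * P) := by
    intro g; simp [map_mul, map_inv]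
  have hval : ∀ (g : GL (Fin 3) ℂ) (M : Matrix (Fin 3) (Fin 3) ℂ),
      (g : Matrix (Fin 3) (Fin 3) ℂ) * P = P * M →
        ((P⁻¹ * g * P : GL (Fin 3) ℂ) : Matrix (Fin 3) (Fin 3) ℂ) = M := by
    intro g M h
    rw [Units.val_mul, Units.val_mul, mul_assoc, h, ← mul_assoc, Units.inv_mul, one_mul]
  refine ⟨proj P⁻¹, ?_, ?_⟩
  · rw [hconj]; exact proj_mem_PGL3R_of_val_eq_smul (hval A _ hAP)
  · rw [hconj]; exact proj_mem_PGL3R_of_val_eq_smul (hval B _ (by rw [hBP, one_smul]))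

open DihedralGroup in
theorem exists_conj_map_range_le_PGL3R {n : ℕ} [NeZero n] (f : DihedralGroup n →* PGL3C)
    (hf : f (r 1) ^ 2 ≠ 1) :
    ∃ φ : PGL3C, f.range.map (MulAut.conj φ).toMonoidHom ≤ PGL3R := by
  obtain ⟨φ, ha, hb⟩ := exists_conj_mem_PGL3R (NeZero.ne n) (a := f (r 1)) (b := f (sr 0))
    (by rw [← map_pow, r_one_pow_n, map_one]) (by rw [sq, ← map_mul, sr_mul_self, map_one])
    (by rw [← map_mul, ← map_mul, r_mul_sr, sr_mul_r]; simp) hf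
  refine ⟨φ, ?_⟩
  rw [f.range_eq_map, ← closure_r_one_sr_zero, MonoidHom.map_closure, MonoidHom.map_closure,
    Subgroup.closure_le, Set.image_pair, Set.image_pair, Set.insert_subset_iff,
    Set.singleton_subset_iff]
  exact ⟨ha, hb⟩

theorem stmt10 (n : ℕ) (hn : 3 ≤ n) (G : Subgroup PGL3C)
    (hG : Nonempty (G ≃* DihedralGroup n)) :
    ∃ φ : PGL3C, Subgroup.map (MulAut.conj φ).toMonoidHom G ≤ PGL3R := by
  obtain ⟨e⟩ := hG
  have : NeZero n := ⟨by omega⟩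
  set f : DihedralGroup n →* PGL3C := G.subtype.comp e.symm.toMonoidHom
  have hf : f.range = G := by
    ext x
    exact ⟨by rintro ⟨d, rfl⟩; exact (e.symm d).2, fun hx => ⟨e ⟨x, hx⟩, by simp [f]⟩⟩
  have hr : (DihedralGroup.r 1 : DihedralGroup n) ^ 2 ≠ 1 := fun h => by
    have := DihedralGroup.orderOf_r_one (n := n) ▸ orderOf_dvd_of_pow_eq_one h
    exact absurd (Nat.le_of_dvd two_pos this) (by omega)
  rw [← hf]
  refine exists_conj_map_range_le_PGL3R f ?_
  rw [← map_pow, ← map_one f]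
  exact (Subtype.val_injective.comp e.symm.injective).ne hr
end
end
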